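/- For every ε > 0 there exists R > 0 such that every point z ∈ L₁ with |z| ≥ R satisfies dist(z, C) ≤ ε, where dist denotes the Euclidean distance from a point to a set in ℂ³. (That is, L₁ is asymptotic to the cone C at infinity.) -/

import Mathlib

open Complex

/-- The Harvey–Lawson cone `C ⊆ ℂ³` (Euclidean `ℂ³`). -/
noncomputable def HLconeE : Set (EuclideanSpace ℂ (Fin 3)) :=
  {z | z ≠ 0 ∧ ‖z 0‖ = ‖z 1‖ ∧
    ‖z 1‖ = ‖z 2‖ ∧
    (z 0 * z 1 * z 2).im = 0 ∧ 0 < (z 0 * z 1 * z 2).re}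

/-- The local model `L₁ ⊆ ℂ³` (Euclidean `ℂ³`). -/
noncomputable def LoneE : Set (EuclideanSpace ℂ (Fin 3)) :=
  {z | normSq (z 0) - 1 = normSq (z 1) ∧ normSq (z 1) = normSq (z 2) ∧
    (z 0 * z 1 * z 2).im = 0 ∧ 0 ≤ (z 0 * z 1 * z 2).re}

/-!
On `L₁` we have `|z₁| = |z₂| = r` and `|z₀| = √(r² + 1)`. Shrinking `z₀` to length `r` does not
change the argument of `z₀z₁z₂`, so for `r > 0` it lands in `C`, at distance
`√(r² + 1) - r = 1 / (√(r² + 1) + r) ≤ 1 / ‖z‖`.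
-/

lemma EuclideanSpace.norm_sq_fin_three {𝕜 : Type*} [RCLike 𝕜] (z : EuclideanSpace 𝕜 (Fin 3)) :
    ‖z‖ ^ 2 = ‖z 0‖ ^ 2 + ‖z 1‖ ^ 2 + ‖z 2‖ ^ 2 := by
  rw [EuclideanSpace.norm_sq_eq, Fin.sum_univ_three]

lemma Complex.re_pos_of_im_eq_zero {w : ℂ} (hw : w ≠ 0) (him : w.im = 0) (hre : 0 ≤ w.re) :
    0 < w.re :=
  hre.lt_of_ne fun h ↦ hw (Complex.ext h.symm him)

namespace LoneE

variable {z : EuclideanSpace ℂ (Fin 3)}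

lemma norm_zero_sq (hz : z ∈ LoneE) : ‖z 0‖ ^ 2 = ‖z 1‖ ^ 2 + 1 := by
  simp only [Complex.sq_norm]; linarith [hz.1]

lemma norm_two (hz : z ∈ LoneE) : ‖z 2‖ = ‖z 1‖ := by
  simp only [Complex.norm_def, hz.2.1]

lemma norm_one_lt_norm_zero (hz : z ∈ LoneE) : ‖z 1‖ < ‖z 0‖ :=
  pow_lt_pow_iff_left₀ (norm_nonneg _) (norm_nonneg _) two_ne_zero |>.mp
    (by rw [norm_zero_sq hz]; linarith)

lemma norm_sq_eq (hz : z ∈ LoneE) : ‖z‖ ^ 2 = 3 * ‖z 1‖ ^ 2 + 1 := by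
  rw [EuclideanSpace.norm_sq_fin_three, norm_zero_sq hz, norm_two hz]; ring

/-- `‖z₀‖ - ‖z₁‖ = 1 / (‖z₀‖ + ‖z₁‖)`, and `‖z‖ ≤ ‖z₀‖ + ‖z₁‖` since `‖z₂‖ = ‖z₁‖ ≤ ‖z₀‖`. -/
lemma norm_zero_sub_norm_one_le (hz : z ∈ LoneE) : ‖z 0‖ - ‖z 1‖ ≤ ‖z‖⁻¹ := by
  have hlt := norm_one_lt_norm_zero hz
  have hr := norm_nonneg (z 1)
  have hsum : ‖z 0‖ ^ 2 - ‖z 1‖ ^ 2 = 1 := by rw [norm_zero_sq hz]; ring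
  have hpos : 0 < ‖z‖ := by
    have := norm_sq_eq hz
    nlinarith [norm_nonneg z]
  have hz_le : ‖z‖ ≤ ‖z 0‖ + ‖z 1‖ :=
    (pow_le_pow_iff_left₀ (norm_nonneg _) (by positivity) two_ne_zero).mp <| by
      rw [EuclideanSpace.norm_sq_fin_three, norm_two hz]; nlinarith
  rw [← one_div, le_div_iff₀ hpos]
  nlinarith

end LoneE

noncomputable def rescaleFirst (z : EuclideanSpace ℂ (Fin 3)) : EuclideanSpace ℂ (Fin 3) :=
  z - EuclideanSpace.single 0 (((1 - ‖z 1‖ / ‖z 0‖ : ℝ) : ℂ) * z 0)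

section rescaleFirst

variable (z : EuclideanSpace ℂ (Fin 3))

@[simp] lemma rescaleFirst_apply_zero : rescaleFirst z 0 = ((‖z 1‖ / ‖z 0‖ : ℝ) : ℂ) * z 0 := by
  simp [rescaleFirst]; ring

@[simp] lemma rescaleFirst_apply_one : rescaleFirst z 1 = z 1 := by
  simp [rescaleFirst]

@[simp] lemma rescaleFirst_apply_two : rescaleFirst z 2 = z 2 := by
  simp [rescaleFirst]

variable {z}

lemma norm_rescaleFirst_zero (h0 : z 0 ≠ 0) : ‖rescaleFirst z 0‖ = ‖z 1‖ := by
  rw [rescaleFirst_apply_zero, norm_mul, Complex.norm_real, Real.norm_of_nonneg (by positivity),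
    div_mul_cancel₀ _ (norm_ne_zero_iff.2 h0)]

lemma dist_rescaleFirst (h : ‖z 1‖ ≤ ‖z 0‖) : dist z (rescaleFirst z) = ‖z 0‖ - ‖z 1‖ := by
  rcases eq_or_ne (z 0) 0 with h0 | h0
  · have h1 : ‖z 1‖ = 0 := le_antisymm (by simpa [h0] using h) (norm_nonneg _)
    simp [rescaleFirst, h0, h1]
  have hc : 0 ≤ 1 - ‖z 1‖ / ‖z 0‖ := sub_nonneg.2 <| (div_le_one (by positivity)).2 h
  rw [rescaleFirst, dist_eq_norm, sub_sub_cancel, PiLp.norm_single, norm_mul,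
    Complex.norm_real, Real.norm_of_nonneg hc, sub_mul, one_mul,
    div_mul_cancel₀ _ (norm_ne_zero_iff.2 h0)]

end rescaleFirst

namespace LoneE

variable {z : EuclideanSpace ℂ (Fin 3)}

lemma rescaleFirst_mem_HLconeE (hz : z ∈ LoneE) (h1 : z 1 ≠ 0) :
    rescaleFirst z ∈ HLconeE := by
  have h0 : z 0 ≠ 0 := norm_pos_iff.1 <| (norm_nonneg _).trans_lt (norm_one_lt_norm_zero hz)
  have h2 : z 2 ≠ 0 := norm_ne_zero_iff.1 <| (norm_two hz).trans_ne (norm_ne_zero_iff.2 h1)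
  have hprod : rescaleFirst z 0 * rescaleFirst z 1 * rescaleFirst z 2 =
      ((‖z 1‖ / ‖z 0‖ : ℝ) : ℂ) * (z 0 * z 1 * z 2) := by
    simp only [rescaleFirst_apply_zero, rescaleFirst_apply_one, rescaleFirst_apply_two]; ring
  have hc : 0 < ‖z 1‖ / ‖z 0‖ := by positivity
  refine ⟨fun h ↦ h1 ?_, ?_, ?_, ?_, ?_⟩
  · simpa using congr($h 1)
  · rw [norm_rescaleFirst_zero h0, rescaleFirst_apply_one]
  · rw [rescaleFirst_apply_one, rescaleFirst_apply_two, norm_two hz]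
  · rw [hprod, Complex.im_ofReal_mul, hz.2.2.1, mul_zero]
  · rw [hprod, Complex.re_ofReal_mul]
    exact mul_pos hc <| Complex.re_pos_of_im_eq_zero (by simp [h0, h1, h2]) hz.2.2.1 hz.2.2.2

lemma infDist_HLconeE_le (hz : z ∈ LoneE) (hnorm : 1 < ‖z‖) :
    Metric.infDist z HLconeE ≤ ‖z‖⁻¹ := by
  have h1 : z 1 ≠ 0 := by
    rintro h1
    have := norm_sq_eq hz
    simp only [h1, norm_zero] at this
    nlinarith
  calc Metric.infDist z HLconeE ≤ dist z (rescaleFirst z) :=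
        Metric.infDist_le_dist_of_mem (rescaleFirst_mem_HLconeE hz h1)
    _ = ‖z 0‖ - ‖z 1‖ := dist_rescaleFirst (norm_one_lt_norm_zero hz).le
    _ ≤ ‖z‖⁻¹ := norm_zero_sub_norm_one_le hz

end LoneE

/-- `L₁` is asymptotic to the cone `C` at infinity: for every
`ε > 0` there exists `R > 0` such that every point `z ∈ L₁` with `|z| ≥ R` satisfies
`dist(z, C) ≤ ε`, the Euclidean distance from a point to a set in `ℂ³`. -/
theorem Lone_asymptotic_to_cone :
    ∀ ε > (0 : ℝ), ∃ R > (0 : ℝ), ∀ z ∈ LoneE, R ≤ ‖z‖ →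
      Metric.infDist z HLconeE ≤ ε := by
  intro ε hε
  refine ⟨max 2 ε⁻¹, by positivity, fun z hz hR ↦ ?_⟩
  calc Metric.infDist z HLconeE ≤ ‖z‖⁻¹ :=
        LoneE.infDist_HLconeE_le hz <| one_lt_two.trans_le <| (le_max_left _ _).trans hR
    _ ≤ ε := inv_le_of_inv_le₀ hε <| (le_max_right _ _).trans hR
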